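/- arXiv:math/0507060 — 5 statements merged into one kernel-verified Lean document; each statement's English description precedes it below -/
import Mathlib

section
/- Let H = H♭ ⊕ H♯ be an orthogonal decomposition of a Hilbert space with projector P♭ onto H♭, and let H₋ be a closed subspace. Then the pair (H♯, H₋) is Fredholm if and only if the restriction P♭|_{H₋} : H₋ → H♭ is a Fredholm operator, and in that case Ind(H♯, H₋) = ind(P♭|_{H₋}). -/
/-!
Let `T : H₋ → ran P♭` be the corestriction of `P♭|_{H₋}`. Then `ker T ≅ H♯ ∩ H₋`, and `H♯ + H₋`
is the preimage of `ran T` under the surjection `P♭ : H → ran P♭`, so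
`H / (H♯ + H₋) ≅ ran P♭ / ran T`. That surjection is moreover a topological quotient map, since
the inclusion `ran P♭ → H` is a continuous section of it; hence `H♯ + H₋` is closed iff `ran T` is.
-/

open Submodule Module

/-- A bounded operator between normed spaces is Fredholm: finite-dimensional kernel,
closed range of finite codimension. -/
def IsFredholmOp {E F : Type*} [NormedAddCommGroup E] [NormedSpace ℂ E]
    [NormedAddCommGroup F] [NormedSpace ℂ F] (T : E →L[ℂ] F) : Prop :=
  FiniteDimensional ℂ (LinearMap.ker (T : E →ₗ[ℂ] F)) ∧ IsClosed (LinearMap.range (T : E →ₗ[ℂ] F) : Set F) ∧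
    FiniteDimensional ℂ (F ⧸ LinearMap.range (T : E →ₗ[ℂ] F))

/-- The index of an operator: dim ker − dim coker. -/
noncomputable def opIndex {E F : Type*} [NormedAddCommGroup E] [NormedSpace ℂ E]
    [NormedAddCommGroup F] [NormedSpace ℂ F] (T : E →L[ℂ] F) : ℤ :=
  (finrank ℂ (LinearMap.ker (T : E →ₗ[ℂ] F)) : ℤ) - finrank ℂ (F ⧸ LinearMap.range (T : E →ₗ[ℂ] F))

/-- A pair of subspaces is Fredholm: finite-dimensional intersection and
closed sum of finite codimension. -/
def IsFredholmPair {H : Type*} [NormedAddCommGroup H] [NormedSpace ℂ H]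
    (A B : Submodule ℂ H) : Prop :=
  FiniteDimensional ℂ ↥(A ⊓ B) ∧ IsClosed ((A ⊔ B : Submodule ℂ H) : Set H) ∧
    FiniteDimensional ℂ (H ⧸ (A ⊔ B))

/-- Index of a Fredholm pair: dim(A ∩ B) − codim(A + B). -/
noncomputable def pairIndex {H : Type*} [NormedAddCommGroup H] [NormedSpace ℂ H]
    (A B : Submodule ℂ H) : ℤ :=
  (finrank ℂ ↥(A ⊓ B) : ℤ) - finrank ℂ (H ⧸ (A ⊔ B))

namespace LinearMap

variable {R M N : Type*} [Ring R] [AddCommGroup M] [Module R M] [AddCommGroup N] [Module R N]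

noncomputable def quotientComapEquivOfSurjective {g : M →ₗ[R] N} (hg : Function.Surjective g)
    (S : Submodule R N) : (M ⧸ S.comap g) ≃ₗ[R] N ⧸ S :=
  quotEquivOfEq _ _ (by rw [ker_comp, ker_mkQ]) ≪≫ₗ
    (S.mkQ ∘ₗ g).quotKerEquivOfSurjective ((mkQ_surjective S).comp hg)

variable (f : M →ₗ[R] N) (U : Submodule R M)

def kerRangeRestrictCompSubtypeEquiv : ker (f.rangeRestrict ∘ₗ U.subtype) ≃ₗ[R] ↥(ker f ⊓ U) :=
  LinearEquiv.ofEq _ _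
      (by rw [ker_comp, ker_rangeRestrict, comap_inf, comap_subtype_self, inf_top_eq]) ≪≫ₗ
    comapSubtypeEquivOfLe inf_le_right

theorem comap_rangeRestrict_range_comp_subtype :
    (range (f.rangeRestrict ∘ₗ U.subtype)).comap f.rangeRestrict = ker f ⊔ U := by
  rw [range_comp, range_subtype, comap_map_eq, ker_rangeRestrict, sup_comm]

noncomputable def quotientKerSupEquiv :
    (M ⧸ (ker f ⊔ U)) ≃ₗ[R] range f ⧸ range (f.rangeRestrict ∘ₗ U.subtype) :=
  quotEquivOfEq _ _ (comap_rangeRestrict_range_comp_subtype f U).symm ≪≫ₗ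
    quotientComapEquivOfSurjective f.surjective_rangeRestrict _

end LinearMap

namespace ContinuousLinearMap

variable {R E : Type*} [TopologicalSpace E] [AddCommGroup E]

theorem isClosed_comap_rangeRestrict_iff [Semiring R] [Module R E] {P : E →L[R] E}
    (hP : P ∘L P = P) (S : Submodule R (LinearMap.range (P : E →ₗ[R] E))) :
    IsClosed (S.comap (P : E →ₗ[R] E).rangeRestrict : Set E) ↔
      IsClosed (S : Set (LinearMap.range (P : E →ₗ[R] E))) := by
  have hleft : Function.LeftInverse (P : E →ₗ[R] E).rangeRestrict Subtype.val := by
    rintro ⟨_, y, rfl⟩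
    exact Subtype.ext congr($hP y)
  exact (Topology.IsQuotientMap.of_inverse continuous_subtype_val (P.continuous.subtype_mk _)
    hleft).isClosed_preimage

theorem isClosed_ker_sup_iff [Ring R] [Module R E] {P : E →L[R] E} (hP : P ∘L P = P)
    (U : Submodule R E) :
    IsClosed ((LinearMap.ker (P : E →ₗ[R] E) ⊔ U : Submodule R E) : Set E) ↔
      IsClosed (LinearMap.range ((P : E →ₗ[R] E).rangeRestrict ∘ₗ U.subtype) :
        Set (LinearMap.range (P : E →ₗ[R] E))) := by
  rw [← LinearMap.comap_rangeRestrict_range_comp_subtype, isClosed_comap_rangeRestrict_iff hP]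

end ContinuousLinearMap

theorem stmt1_general {H : Type*} [NormedAddCommGroup H] [InnerProductSpace ℂ H]
    (Pb : H →L[ℂ] H) (hPb : Pb ∘L Pb = Pb)
    (Hm : Submodule ℂ H)
    (restr : ↥Hm →L[ℂ] ↥(LinearMap.range (Pb : H →ₗ[ℂ] H)))
    (hrestr : restr = (Pb.comp Hm.subtypeL).codRestrict (LinearMap.range (Pb : H →ₗ[ℂ] H))
      (fun x => LinearMap.mem_range_self _ _)) :
    (IsFredholmPair (LinearMap.ker (Pb : H →ₗ[ℂ] H)) Hm ↔ IsFredholmOp restr) ∧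
      (IsFredholmPair (LinearMap.ker (Pb : H →ₗ[ℂ] H)) Hm →
        pairIndex (LinearMap.ker (Pb : H →ₗ[ℂ] H)) Hm = opIndex restr) := by
  subst hrestr
  -- `restr`, as a linear map, is `(Pb : H →ₗ[ℂ] H).rangeRestrict ∘ₗ Hm.subtype` definitionally
  let eKer := (Pb : H →ₗ[ℂ] H).kerRangeRestrictCompSubtypeEquiv Hm
  let eCoker := (Pb : H →ₗ[ℂ] H).quotientKerSupEquiv Hm
  refine ⟨?_, fun _ => ?_⟩
  · exact and_congr (Module.Finite.equiv_iff eKer.symm)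
      (and_congr (Pb.isClosed_ker_sup_iff hPb Hm) (Module.Finite.equiv_iff eCoker))
  · rw [pairIndex, opIndex, ← eKer.finrank_eq, eCoker.finrank_eq]
    rfl

/-- for a splitting given by a bounded projector P♭ (with H♭ = range P♭,
H♯ = ker P♭), the pair (H♯, H₋) is Fredholm iff P♭|_{H₋} : H₋ → H♭ is Fredholm,
with equal indices. -/
theorem stmt1 {H : Type*} [NormedAddCommGroup H] [InnerProductSpace ℂ H] [CompleteSpace H]
    (Pb : H →L[ℂ] H) (hPb : Pb ∘L Pb = Pb)
    (Hm : Submodule ℂ H) (hHm : IsClosed (Hm : Set H))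
    (restr : ↥Hm →L[ℂ] ↥(LinearMap.range (Pb : H →ₗ[ℂ] H)))
    (hrestr : restr = (Pb.comp Hm.subtypeL).codRestrict (LinearMap.range (Pb : H →ₗ[ℂ] H))
      (fun x => LinearMap.mem_range_self _ _)) :
    (IsFredholmPair (LinearMap.ker (Pb : H →ₗ[ℂ] H)) Hm ↔ IsFredholmOp restr) ∧
      (IsFredholmPair (LinearMap.ker (Pb : H →ₗ[ℂ] H)) Hm →
        pairIndex (LinearMap.ker (Pb : H →ₗ[ℂ] H)) Hm = opIndex restr) :=
  stmt1_general Pb hPb Hm restr hrestr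
end

section
/- Let H = H♭ ⊕ H♯ with projectors P♭, P♯, and let φ be an invertible bounded operator on H such that φP♭ − P♭φ is compact. Then the operator φP♭ + P♯ is Fredholm, and the pair (H♯, φ(H♭)) is a Fredholm pair with Ind(H♯, φ(H♭)) = ind(φP♭ + P♯). -/
/-!
Put `T = φ P♭ + P♯` and `S = φ⁻¹ P♭ + P♯`. Expanding with `P♭² = P♭` shows that `S T - 1` and
`T S - 1` are products containing the commutator `φ P♭ - P♭ φ`, so `T` is invertible modulo
compact operators. A compact operator acts as the identity on `ker T` (namely `1 - S T`) and on
`(range T)ᗮ` (namely `1 - T S` compressed to that subspace), so both are finite-dimensional; and a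
compactness argument shows that `T` is bounded below on `(ker T)ᗮ`, so its range is closed.
Finally `range T = H♯ + φ(H♭)`, and `x ↦ φ (P♭ x)` maps `ker T` isomorphically onto
`H♯ ∩ φ(H♭)`, so the pair `(H♯, φ(H♭))` has the same kernel and cokernel dimensions as `T`.
-/

open Submodule Module

section Ring

variable {R : Type*} [Ring R] {p q f g : R}

theorem IsIdempotentElem.mul_add_mul_add_sub_one (hp : IsIdempotentElem p) (hpq : p + q = 1)
    (hgf : g * f = 1) : (g * p + q) * (f * p + q) - 1 = (1 - g) * (f * p - p * f) * p := by
  obtain rfl : q = 1 - p := eq_sub_of_add_eq' hpq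
  rw [← sub_eq_zero]
  have hp' : p * p = p := hp
  calc _ = (g + f) * (p - p * p) + (g * f - 1) * (p * p) + 2 * (p * p - p) := by noncomm_ring
    _ = 0 := by rw [hp', hgf]; simp

theorem mul_sub_mul_eq_neg_mul_mul_sub_mul_mul (hgf : g * f = 1) (hfg : f * g = 1) :
    g * p - p * g = -(g * (f * p - p * f) * g) := by
  rw [← sub_eq_zero]
  calc _ = (g * f - 1) * p * g - g * p * (f * g - 1) := by noncomm_ring
    _ = 0 := by rw [hgf, hfg]; simp

end Ring

section CompactCommutator

variable {𝕜 E : Type*} [NontriviallyNormedField 𝕜] [NormedAddCommGroup E] [NormedSpace 𝕜 E]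
  {p q f g : E →L[𝕜] E}

theorem IsIdempotentElem.isCompactOperator_mul_add_mul_add_sub_one (hp : IsIdempotentElem p)
    (hpq : p + q = 1) (hgf : g * f = 1) (hc : IsCompactOperator (f * p - p * f)) :
    IsCompactOperator ((g * p + q) * (f * p + q) - 1 : E →L[𝕜] E) := by
  rw [hp.mul_add_mul_add_sub_one hpq hgf]
  exact (hc.clm_comp (1 - g)).comp_clm p

theorem IsCompactOperator.mul_sub_mul_of_mul_eq_one (hc : IsCompactOperator (f * p - p * f))
    (hgf : g * f = 1) (hfg : f * g = 1) : IsCompactOperator (g * p - p * g) := by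
  rw [mul_sub_mul_eq_neg_mul_mul_sub_mul_mul hgf hfg]
  exact ((hc.clm_comp g).comp_clm g).neg

end CompactCommutator

section Fredholm

variable {𝕜 E F : Type*} [RCLike 𝕜] [NormedAddCommGroup E] [NormedSpace 𝕜 E]
  [NormedAddCommGroup F] [NormedSpace 𝕜 F]

theorem Submodule.finiteDimensional_of_isCompactOperator_of_forall_apply_eq {V : Submodule 𝕜 E}
    (hV : IsClosed (V : Set E)) {K : E →L[𝕜] E} (hK : IsCompactOperator K)
    (hKV : ∀ v ∈ V, K v = v) : FiniteDimensional 𝕜 V := by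
  have hmaps : ∀ v ∈ V, (K : E →ₗ[𝕜] E) v ∈ V := fun v hv => (hKV v hv).symm ▸ hv
  have hid : ⇑((K : E →ₗ[𝕜] E).restrict hmaps) = id := funext fun v => Subtype.ext (hKV v v.2)
  exact .of_isCompactOperator_id (hid ▸ hK.restrict hmaps hV)

namespace ContinuousLinearMap

variable {T : E →L[𝕜] F} {S : F →L[𝕜] E}

theorem finiteDimensional_ker_of_isCompactOperator
    (hST : IsCompactOperator (S ∘L T - 1 : E →L[𝕜] E)) :
    FiniteDimensional 𝕜 (LinearMap.ker (T : E →ₗ[𝕜] F)) := by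
  refine (LinearMap.ker (T : E →ₗ[𝕜] F)).finiteDimensional_of_isCompactOperator_of_forall_apply_eq
    T.isClosed_ker (K := -(S ∘L T - 1)) hST.neg fun v hv => ?_
  have hv : T v = 0 := hv
  simp [hv]

open Filter Topology in
theorem exists_norm_le_mul_norm_of_isCompactOperator
    (hST : IsCompactOperator (S ∘L T - 1 : E →L[𝕜] E)) {V : Submodule 𝕜 E}
    (hV : IsClosed (V : Set E)) (hVT : Disjoint V (LinearMap.ker (T : E →ₗ[𝕜] F))) :
    ∃ C : NNReal, ∀ v ∈ V, ‖v‖ ≤ C * ‖T v‖ := by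
  by_contra! h
  have hunit : ∀ n : ℕ, ∃ u ∈ V, ‖u‖ = 1 ∧ ‖T u‖ ≤ 1 / ((n : ℝ) + 1) := by
    intro n
    obtain ⟨v, hvV, hv⟩ := h (n + 1)
    have hv0 : v ≠ 0 := by rintro rfl; simp at hv
    refine ⟨(‖v‖⁻¹ : 𝕜) • v, V.smul_mem _ hvV, norm_smul_inv_norm hv0, ?_⟩
    rw [map_smul, norm_smul, norm_inv, RCLike.norm_ofReal, abs_norm]
    push_cast at hv
    rw [inv_mul_le_iff₀ (norm_pos_iff.2 hv0), mul_one_div, le_div_iff₀ (by positivity)]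
    linarith
  -- As `u = S (T u) - (S T - 1) u`, a subsequence of `u` converges to a unit vector of `V ∩ ker T`.
  choose u huV hu1 hTu using hunit
  obtain ⟨C, hC, hKC⟩ := hST.image_closedBall_subset_compact 1
  obtain ⟨y, -, ψ, hψ, hy⟩ := hC.tendsto_subseq (x := fun n => (S ∘L T - 1) (u n))
    fun n => hKC ⟨u n, by simp [hu1], rfl⟩
  have hTu : Tendsto (fun n => T (u (ψ n))) atTop (𝓝 0) :=
    (squeeze_zero_norm hTu tendsto_one_div_add_atTop_nhds_zero_nat).comp hψ.tendsto_atTop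
  have hu : Tendsto (fun n => u (ψ n)) atTop (𝓝 (-y)) := by
    simpa using ((S.continuous.tendsto 0).comp hTu).sub hy
  have hyV : -y ∈ V := hV.mem_of_tendsto hu (Eventually.of_forall fun n => huV _)
  have hyT : -y ∈ LinearMap.ker (T : E →ₗ[𝕜] F) :=
    tendsto_nhds_unique ((T.continuous.tendsto _).comp hu) hTu
  have hy1 : ‖-y‖ = 1 := tendsto_nhds_unique hu.norm (by simp [hu1])
  simp [disjoint_def.1 hVT _ hyV hyT] at hy1

end ContinuousLinearMap

end Fredholm

namespace ContinuousLinearMap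

variable {𝕜 E F : Type*} [RCLike 𝕜] [NormedAddCommGroup E] [NormedAddCommGroup F]

theorem isClosed_range_of_isCompactOperator [InnerProductSpace 𝕜 E] [CompleteSpace E]
    [NormedSpace 𝕜 F] {T : E →L[𝕜] F} {S : F →L[𝕜] E}
    (hST : IsCompactOperator (S ∘L T - 1 : E →L[𝕜] E)) :
    IsClosed (LinearMap.range (T : E →ₗ[𝕜] F) : Set F) := by
  set V := (LinearMap.ker (T : E →ₗ[𝕜] F))ᗮ
  have : CompleteSpace (LinearMap.ker (T : E →ₗ[𝕜] F)) := T.isClosed_ker.completeSpace_coe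
  obtain ⟨C, hC⟩ := exists_norm_le_mul_norm_of_isCompactOperator hST
    (Submodule.isClosed_orthogonal _) (Submodule.orthogonal_disjoint _).symm
  have hanti : AntilipschitzWith C (T ∘L V.subtypeL) :=
    (T ∘L V.subtypeL).antilipschitz_of_bound fun v => hC v v.2
  have hrange : (LinearMap.range (T : E →ₗ[𝕜] F) : Set F) = Set.range (T ∘L V.subtypeL) := by
    rw [← map_eq_range_iff.2 (LinearMap.ker (T : E →ₗ[𝕜] F)).isCompl_orthogonal.codisjoint.symm]
    ext; simp [V]
  rw [hrange]
  exact hanti.isClosed_range (T ∘L V.subtypeL).uniformContinuous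

theorem finiteDimensional_orthogonal_range_of_isCompactOperator [NormedSpace 𝕜 E]
    [InnerProductSpace 𝕜 F] [CompleteSpace F] {T : E →L[𝕜] F} {S : F →L[𝕜] E}
    (hTS : IsCompactOperator (T ∘L S - 1 : F →L[𝕜] F)) :
    FiniteDimensional 𝕜 (LinearMap.range (T : E →ₗ[𝕜] F))ᗮ := by
  set N := (LinearMap.range (T : E →ₗ[𝕜] F))ᗮ
  refine N.finiteDimensional_of_isCompactOperator_of_forall_apply_eq
    (Submodule.isClosed_orthogonal _) (K := N.starProjection ∘L (-(T ∘L S - 1)))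
    (hTS.neg.clm_comp N.starProjection) fun v hv => ?_
  have hTSv : N.starProjection (T (S v)) = 0 :=
    N.starProjection_apply_eq_zero_iff.2 (Submodule.le_orthogonal_orthogonal _ ⟨S v, rfl⟩)
  simp [hTSv, N.starProjection_eq_self_iff.2 hv]

end ContinuousLinearMap

theorem Submodule.finiteDimensional_quotient_of_finiteDimensional_orthogonal
    {𝕜 F : Type*} [RCLike 𝕜] [NormedAddCommGroup F] [InnerProductSpace 𝕜 F] [CompleteSpace F]
    {K : Submodule 𝕜 F} (hK : IsClosed (K : Set F)) [FiniteDimensional 𝕜 Kᗮ] :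
    FiniteDimensional 𝕜 (F ⧸ K) :=
  have : CompleteSpace K := hK.completeSpace_coe
  Module.Finite.equiv K.quotientEquivOrthogonal.toLinearEquiv.symm

theorem isFredholmOp_of_isCompactOperator {E F : Type*} [NormedAddCommGroup E]
    [InnerProductSpace ℂ E] [CompleteSpace E] [NormedAddCommGroup F] [InnerProductSpace ℂ F]
    [CompleteSpace F] {T : E →L[ℂ] F} {S : F →L[ℂ] E}
    (hST : IsCompactOperator (S ∘L T - 1 : E →L[ℂ] E))
    (hTS : IsCompactOperator (T ∘L S - 1 : F →L[ℂ] F)) : IsFredholmOp T :=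
  have hclosed := ContinuousLinearMap.isClosed_range_of_isCompactOperator hST
  have := ContinuousLinearMap.finiteDimensional_orthogonal_range_of_isCompactOperator hTS
  ⟨ContinuousLinearMap.finiteDimensional_ker_of_isCompactOperator hST, hclosed,
    Submodule.finiteDimensional_quotient_of_finiteDimensional_orthogonal hclosed⟩

section LinearAlgebra

variable {R M : Type*} [Ring R] [AddCommGroup M] [Module R M] {P Q : M →ₗ[R] M}

theorem LinearMap.comp_apply_mem_inf_of_mem_ker (f : M →ₗ[R] M) {x : M}
    (hx : x ∈ LinearMap.ker (f ∘ₗ P + Q)) :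
    f (P x) ∈ LinearMap.range Q ⊓ (LinearMap.range P).map f := by
  have hfx : f (P x) = Q (-x) := by
    rw [map_neg, eq_neg_iff_add_eq_zero]
    exact hx
  exact ⟨⟨-x, hfx.symm⟩, ⟨P x, LinearMap.mem_range_self P x, rfl⟩⟩

namespace IsIdempotentElem

theorem range_comp_add (hP : IsIdempotentElem P) (hPQ : P + Q = 1) (f : M →ₗ[R] M) :
    LinearMap.range (f ∘ₗ P + Q) = LinearMap.range Q ⊔ (LinearMap.range P).map f := by
  obtain rfl : Q = 1 - P := eq_sub_of_add_eq' hPQ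
  have hPP (x : M) : P (P x) = P x := LinearMap.congr_fun hP x
  refine le_antisymm ?_ (sup_le ?_ ?_)
  · rintro _ ⟨x, rfl⟩
    exact add_mem (mem_sup_right ⟨P x, LinearMap.mem_range_self P x, rfl⟩)
      (mem_sup_left (LinearMap.mem_range_self _ x))
  · rintro _ ⟨x, rfl⟩
    exact ⟨(1 - P) x, by simp [hPP]⟩
  · rintro _ ⟨_, ⟨x, rfl⟩, rfl⟩
    exact ⟨P x, by simp [hPP]⟩

noncomputable def kerEquivInf (hP : IsIdempotentElem P) (hPQ : P + Q = 1) {f : M →ₗ[R] M}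
    (hf : Function.Injective f) :
    LinearMap.ker (f ∘ₗ P + Q) ≃ₗ[R] ↥(LinearMap.range Q ⊓ (LinearMap.range P).map f) := by
  refine .ofBijective (LinearMap.codRestrict _ (f ∘ₗ P ∘ₗ (LinearMap.ker (f ∘ₗ P + Q)).subtype)
    fun x => LinearMap.comp_apply_mem_inf_of_mem_ker f x.2) ⟨?_, ?_⟩
  all_goals obtain rfl : Q = 1 - P := eq_sub_of_add_eq' hPQ
  all_goals have hPP (x : M) : P (P x) = P x := LinearMap.congr_fun hP x
  · refine (injective_iff_map_eq_zero _).2 fun ⟨x, hx⟩ h => ?_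
    have hPx : P x = 0 := hf (by simpa using congr_arg Subtype.val h)
    have hx : f (P x) + (x - P x) = 0 := by simpa using hx
    simpa [hPx] using hx
  · rintro ⟨_, ⟨z, rfl⟩, _, ⟨w, rfl⟩, hy⟩
    have hy : f (P w) = z - P z := by simpa using hy
    refine ⟨⟨P w - (1 - P) z, ?_⟩, Subtype.ext ?_⟩ <;> simp [hPP, hy]

end IsIdempotentElem

end LinearAlgebra

/-- if φ is invertible and almost commutes with P♭ then φP♭ + P♯ is
Fredholm, (H♯, φ(H♭)) is a Fredholm pair, and the indices agree. -/
theorem stmt2 {H : Type*} [NormedAddCommGroup H] [InnerProductSpace ℂ H] [CompleteSpace H]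
    (Pb Ps : H →L[ℂ] H) (hPb : Pb ∘L Pb = Pb) (hsum : Pb + Ps = 1)
    (φ : H ≃L[ℂ] H)
    (hcomm : IsCompactOperator ((φ : H →L[ℂ] H) ∘L Pb - Pb ∘L (φ : H →L[ℂ] H))) :
    IsFredholmOp ((φ : H →L[ℂ] H) ∘L Pb + Ps) ∧
      IsFredholmPair (LinearMap.range (Ps : H →ₗ[ℂ] H))
        ((LinearMap.range (Pb : H →ₗ[ℂ] H)).map ((φ : H →L[ℂ] H) : H →ₗ[ℂ] H)) ∧
      pairIndex (LinearMap.range (Ps : H →ₗ[ℂ] H))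
          ((LinearMap.range (Pb : H →ₗ[ℂ] H)).map ((φ : H →L[ℂ] H) : H →ₗ[ℂ] H)) =
        opIndex ((φ : H →L[ℂ] H) ∘L Pb + Ps) := by
  have hφ : (φ.symm : H →L[ℂ] H) * φ = 1 := φ.coe_symm_comp_coe
  have hφ' : (φ : H →L[ℂ] H) * φ.symm = 1 := φ.coe_comp_coe_symm
  have hPb : IsIdempotentElem Pb := hPb
  have hST := hPb.isCompactOperator_mul_add_mul_add_sub_one hsum hφ hcomm
  have hTS := hPb.isCompactOperator_mul_add_mul_add_sub_one hsum hφ'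
    (hcomm.mul_sub_mul_of_mul_eq_one hφ hφ')
  obtain ⟨hker, hclosed, hcoker⟩ := isFredholmOp_of_isCompactOperator hST hTS
  have hP : IsIdempotentElem (Pb : H →ₗ[ℂ] H) := congr_arg ContinuousLinearMap.toLinearMap hPb
  have hPQ : (Pb : H →ₗ[ℂ] H) + Ps = 1 := congr_arg ContinuousLinearMap.toLinearMap hsum
  have hT : (((φ : H →L[ℂ] H) ∘L Pb + Ps : H →L[ℂ] H) : H →ₗ[ℂ] H) =
      (φ : H →ₗ[ℂ] H) ∘ₗ (Pb : H →ₗ[ℂ] H) + (Ps : H →ₗ[ℂ] H) := rfl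
  have hrange := hT ▸ hP.range_comp_add hPQ (φ : H →ₗ[ℂ] H)
  let e := hT ▸ hP.kerEquivInf hPQ φ.injective
  refine ⟨⟨hker, hclosed, hcoker⟩, ⟨e.finiteDimensional, hrange ▸ hclosed, hrange ▸ hcoker⟩, ?_⟩
  rw [pairIndex, opIndex, e.finrank_eq, hrange]
  rfl
end

section
/- Let H = H♭ ⊕ H♯ with projectors P♭, P♯. The map ind~ : GL(P♭, K) → ℤ defined by ind~(φ) = ind(φP♭ + P♯) is a group homomorphism: for φ, ψ ∈ GL(P♭, K), ind~(φψ) = ind~(φ) + ind~(ψ). -/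
open Submodule Module

/-
Write `A φ = φ P♭ + P♯ = φ P + (1 - P)`. For an idempotent `P`,
`A u * A v = A (u v) + (u - 1) [P, v] P`, so on operators commuting with `P` up to compacts,
`φ ↦ A φ` is multiplicative modulo compact operators: `A φ` is invertible modulo compacts with
inverse `A φ⁻¹`, and `A (φ ψ) - A φ * A ψ` is compact.

On a Hilbert space an operator of the form `1 + K` with `K` compact has index zero: `K` is within
distance `< 1` of a finite-rank `F`, so `1 + K = u (1 + u⁻¹ F)` with `u` invertible, and a
finite-rank perturbation `1 + G` of the identity has the same kernel and cokernel as its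
restriction to the finite-dimensional space `range G`. Consequently operators invertible modulo
compacts have finite-dimensional kernel and cokernel, their index is additive (algebraic
additivity of the index under composition) and unchanged by compact perturbations, whence
`ind (A (φ ψ)) = ind (A φ * A ψ) = ind (A φ) + ind (A ψ)`.
-/

namespace LinearMap

variable {k U V W : Type*} [DivisionRing k] [AddCommGroup U] [Module k U]
  [AddCommGroup V] [Module k V] [AddCommGroup W] [Module k W]

structure HasFiniteKerCoker (f : V →ₗ[k] W) : Prop where
  finiteDimensional_ker : FiniteDimensional k (ker f)
  finiteDimensional_coker : FiniteDimensional k (W ⧸ range f)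

theorem HasFiniteKerCoker.comp {g : V →ₗ[k] W} {f : U →ₗ[k] V} (hg : g.HasFiniteKerCoker)
    (hf : f.HasFiniteKerCoker) : (g ∘ₗ f).HasFiniteKerCoker := by
  have := hf.1; have := hf.2; have := hg.1; have := hg.2
  constructor
  · rw [ker_comp]; infer_instance
  · rw [range_comp]; infer_instance

theorem HasFiniteKerCoker.index_comp {g : V →ₗ[k] W} {f : U →ₗ[k] V}
    (hg : g.HasFiniteKerCoker) (hf : f.HasFiniteKerCoker) :
    (g ∘ₗ f).index = g.index + f.index := by
  have := hf.1; have := hf.2; have := hg.1; have := hg.2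
  exact LinearMap.index_comp g

theorem HasFiniteKerCoker.of_comp {f : V →ₗ[k] W} {g g' : W →ₗ[k] V}
    (hl : FiniteDimensional k (ker (g ∘ₗ f)))
    (hr : FiniteDimensional k (W ⧸ range (f ∘ₗ g'))) :
    f.HasFiniteKerCoker where
  finiteDimensional_ker := finiteDimensional_of_le (ker_le_ker_comp f g)
  finiteDimensional_coker := .of_surjective _ (factor_surjective (range_comp_le_range g' f))

theorem _root_.LinearEquiv.hasFiniteKerCoker (e : V ≃ₗ[k] W) :
    (e : V →ₗ[k] W).HasFiniteKerCoker := by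
  constructor
  · rw [LinearEquiv.ker]; infer_instance
  · rw [LinearEquiv.range]; infer_instance

theorem _root_.Submodule.mkQ_comp_subtype_surjective {p q : Submodule k V} (h : p ⊔ q = ⊤) :
    Function.Surjective (q.mkQ ∘ₗ p.subtype) := by
  rw [← range_eq_top, range_comp, range_subtype, map_mkQ_eq_top, sup_comm, h]

section InvariantSubspace

variable {T : V →ₗ[k] V} {p : Submodule k V}

noncomputable def restrictKerEquiv (hTp : ∀ x ∈ p, T x ∈ p) (hpre : p.comap T ≤ p) :
    ker (T.restrict hTp) ≃ₗ[k] ker T :=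
  (LinearEquiv.ofEq _ _ (ker_restrict hTp)).trans
    (comapSubtypeEquivOfLe ((comap_mono bot_le).trans hpre))

noncomputable def restrictCokerEquiv (hTp : ∀ x ∈ p, T x ∈ p) (hpre : p.comap T ≤ p)
    (hsup : p ⊔ range T = ⊤) :
    (p ⧸ range (T.restrict hTp)) ≃ₗ[k] V ⧸ range T := by
  let u := (range T).mkQ ∘ₗ p.subtype
  have hker : ker u = range (T.restrict hTp) := by
    rw [ker_comp, ker_mkQ, range_restrict]
    refine le_antisymm (fun x hx ↦ ?_) (comap_mono map_le_range)
    have : (x : V) ∈ range T ⊓ p := ⟨hx, x.2⟩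
    rw [← map_comap_eq] at this
    exact map_mono hpre this
  exact (quotEquivOfEq _ _ hker.symm).trans
    (u.quotKerEquivOfSurjective (mkQ_comp_subtype_surjective hsup))

theorem index_restrict (hTp : ∀ x ∈ p, T x ∈ p) (hpre : p.comap T ≤ p)
    (hsup : p ⊔ range T = ⊤) :
    (T.restrict hTp).index = T.index := by
  rw [index_eq_finrank_sub, index_eq_finrank_sub, (restrictKerEquiv hTp hpre).finrank_eq,
    (restrictCokerEquiv hTp hpre hsup).finrank_eq]

theorem hasFiniteKerCoker_of_comap_le [FiniteDimensional k p] (hpre : p.comap T ≤ p)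
    (hsup : p ⊔ range T = ⊤) : T.HasFiniteKerCoker where
  finiteDimensional_ker := finiteDimensional_of_le ((comap_mono bot_le).trans hpre)
  finiteDimensional_coker := .of_surjective _ (mkQ_comp_subtype_surjective hsup)

end InvariantSubspace

section FiniteRankPerturbation

variable (F : Module.End k V)

theorem one_add_apply_mem_range : ∀ x ∈ range F, (1 + F) x ∈ range F :=
  fun x hx ↦ add_mem hx (mem_range_self F x)

theorem comap_one_add_range_le : (range F).comap (1 + F) ≤ range F := fun x hx ↦ by
  simpa using sub_mem (mem_comap.mp hx) (mem_range_self F x)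

theorem range_sup_range_one_add : range F ⊔ range (1 + F) = ⊤ :=
  eq_top_iff.mpr fun x _ ↦ by
    simpa using sub_mem (mem_sup_right (mem_range_self (1 + F) x))
      (mem_sup_left (mem_range_self F x) : F x ∈ range F ⊔ range (1 + F))

variable [FiniteDimensional k (range F)]

theorem hasFiniteKerCoker_one_add : (1 + F).HasFiniteKerCoker :=
  hasFiniteKerCoker_of_comap_le (comap_one_add_range_le F) (range_sup_range_one_add F)

theorem index_one_add : (1 + F).index = 0 := by
  rw [← index_restrict (one_add_apply_mem_range F) (comap_one_add_range_le F)
    (range_sup_range_one_add F), index_eq_of_finiteDimensional, sub_self]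

end FiniteRankPerturbation

end LinearMap

section InverseModCompact

variable {𝕜 E : Type*} [NontriviallyNormedField 𝕜] [NormedAddCommGroup E] [NormedSpace 𝕜 E]

def IsInverseModCompact (S T : E →L[𝕜] E) : Prop :=
  IsCompactOperator ⇑(S * T - 1) ∧ IsCompactOperator ⇑(T * S - 1)

variable {S T S' T' K : E →L[𝕜] E}

theorem IsCompactOperator.clm_mul (A : E →L[𝕜] E) (hK : IsCompactOperator K) :
    IsCompactOperator ⇑(A * K) :=
  hK.clm_comp A

theorem IsCompactOperator.mul_clm (hK : IsCompactOperator K) (A : E →L[𝕜] E) :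
    IsCompactOperator ⇑(K * A) :=
  hK.comp_clm A

theorem IsInverseModCompact.symm (h : IsInverseModCompact S T) : IsInverseModCompact T S :=
  ⟨h.2, h.1⟩

theorem IsInverseModCompact.mul (h : IsInverseModCompact S T) (h' : IsInverseModCompact S' T') :
    IsInverseModCompact (S' * S) (T * T') := by
  constructor
  · have : S' * S * (T * T') - 1 = S' * (S * T - 1) * T' + (S' * T' - 1) := by noncomm_ring
    rw [this]
    exact ((h.1.clm_mul S').mul_clm T').add h'.1
  · have : T * T' * (S' * S) - 1 = T * (T' * S' - 1) * S + (T * S - 1) := by noncomm_ring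
    rw [this]
    exact ((h'.2.clm_mul T).mul_clm S).add h.2

theorem IsInverseModCompact.add_right (h : IsInverseModCompact S T)
    (hK : IsCompactOperator K) : IsInverseModCompact S (T + K) := by
  constructor
  · rw [mul_add, add_sub_right_comm]
    exact h.1.add (hK.clm_mul S)
  · rw [add_mul, add_sub_right_comm]
    exact h.2.add (hK.mul_clm S)

end InverseModCompact

section Hilbert

open ContinuousLinearMap

variable {𝕜 E : Type*} [RCLike 𝕜] [NormedAddCommGroup E] [InnerProductSpace 𝕜 E]

theorem IsCompactOperator.exists_finiteDimensional_range_norm_sub_lt {X : Type*}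
    [NormedAddCommGroup X] [NormedSpace 𝕜 X] {K : X →L[𝕜] E} (hK : IsCompactOperator K)
    {ε : ℝ} (hε : 0 < ε) :
    ∃ F : X →L[𝕜] E, FiniteDimensional 𝕜 (LinearMap.range (F : X →ₗ[𝕜] E)) ∧ ‖K - F‖ < ε := by
  obtain ⟨t, htf, hcov⟩ := Metric.totallyBounded_iff.1
    (hK.isCompact_closure_image_closedBall (f := (K : X →ₗ[𝕜] E)) 1).totallyBounded
    (ε / 2) (half_pos hε)
  let V := span 𝕜 t
  have : FiniteDimensional 𝕜 V := .span_of_finite 𝕜 htf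
  refine ⟨V.starProjection ∘L K, finiteDimensional_of_le (S₂ := V) ?_, ?_⟩
  · rintro _ ⟨x, rfl⟩
    exact V.starProjection_apply_mem (K x)
  have hnet : ∀ x, ‖x‖ = 1 → ‖(K - V.starProjection ∘L K) x‖ ≤ ε / 2 := fun x hx ↦ by
    obtain ⟨z, hz, hdist⟩ := Set.mem_iUnion₂.1
      (hcov (subset_closure ⟨x, by simp [hx], rfl⟩))
    calc ‖(K - V.starProjection ∘L K) x‖ = ‖K x - V.starProjection (K x)‖ := rfl
      _ ≤ ‖K x - z‖ := by
        rw [starProjection_minimal]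
        exact ciInf_le ⟨0, by rintro _ ⟨w, rfl⟩; positivity⟩ (⟨z, subset_span hz⟩ : V)
      _ ≤ ε / 2 := by rw [← dist_eq_norm]; exact hdist.le
  exact (opNorm_le_of_unit_norm (half_pos hε).le hnet).trans_lt (half_lt_self hε)

variable [CompleteSpace E]

theorem exists_eq_linearEquiv_comp_one_add_of_isCompactOperator_sub_one {A : E →L[𝕜] E}
    (hA : IsCompactOperator ⇑(A - 1)) :
    ∃ (e : E ≃ₗ[𝕜] E) (G : Module.End 𝕜 E),
      FiniteDimensional 𝕜 (LinearMap.range G) ∧ (A : E →ₗ[𝕜] E) = e ∘ₗ (1 + G) := by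
  obtain ⟨F, hF, hAF⟩ := hA.exists_finiteDimensional_range_norm_sub_lt one_pos
  let u := Units.oneSub (1 + F - A) (by rwa [← norm_neg, neg_sub, sub_add_eq_sub_sub])
  have hAu : A = u * (1 + ↑u⁻¹ * F) := by
    rw [mul_add, mul_one, ← mul_assoc, u.mul_inv, one_mul, Units.val_oneSub]
    abel
  refine ⟨(ContinuousLinearEquiv.unitsEquiv 𝕜 E u).toLinearEquiv, (↑u⁻¹ : E →L[𝕜] E) ∘ₗ F,
    ?_, by rw [hAu]; rfl⟩
  rw [LinearMap.range_comp]
  infer_instance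

theorem hasFiniteKerCoker_of_isCompactOperator_sub_one {A : E →L[𝕜] E}
    (hA : IsCompactOperator ⇑(A - 1)) : (A : E →ₗ[𝕜] E).HasFiniteKerCoker := by
  obtain ⟨e, G, hG, hAG⟩ := exists_eq_linearEquiv_comp_one_add_of_isCompactOperator_sub_one hA
  rw [hAG]
  exact e.hasFiniteKerCoker.comp (LinearMap.hasFiniteKerCoker_one_add G)

theorem index_eq_zero_of_isCompactOperator_sub_one {A : E →L[𝕜] E}
    (hA : IsCompactOperator ⇑(A - 1)) : (A : E →ₗ[𝕜] E).index = 0 := by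
  obtain ⟨e, G, hG, hAG⟩ := exists_eq_linearEquiv_comp_one_add_of_isCompactOperator_sub_one hA
  rw [hAG, e.hasFiniteKerCoker.index_comp (LinearMap.hasFiniteKerCoker_one_add G),
    LinearMap.index_one_add, LinearEquiv.index_eq_zero, add_zero]

variable {S T S' T' : E →L[𝕜] E}

theorem IsInverseModCompact.hasFiniteKerCoker (h : IsInverseModCompact S T) :
    (T : E →ₗ[𝕜] E).HasFiniteKerCoker :=
  .of_comp (hasFiniteKerCoker_of_isCompactOperator_sub_one h.1).1
    (hasFiniteKerCoker_of_isCompactOperator_sub_one h.2).2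

theorem IsInverseModCompact.index_add_index (h : IsInverseModCompact S T) :
    (S : E →ₗ[𝕜] E).index + (T : E →ₗ[𝕜] E).index = 0 := by
  rw [← h.symm.hasFiniteKerCoker.index_comp h.hasFiniteKerCoker, ← Module.End.mul_eq_comp,
    ← toLinearMap_mul]
  exact index_eq_zero_of_isCompactOperator_sub_one h.1

theorem IsInverseModCompact.index_add_right (h : IsInverseModCompact S T) {K : E →L[𝕜] E}
    (hK : IsCompactOperator K) :
    ((T + K : E →L[𝕜] E) : E →ₗ[𝕜] E).index = (T : E →ₗ[𝕜] E).index := by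
  linarith [h.index_add_index, (h.add_right hK).index_add_index]

theorem IsInverseModCompact.index_mul (h : IsInverseModCompact S T)
    (h' : IsInverseModCompact S' T') :
    ((T * T' : E →L[𝕜] E) : E →ₗ[𝕜] E).index =
      (T : E →ₗ[𝕜] E).index + (T' : E →ₗ[𝕜] E).index :=
  h.hasFiniteKerCoker.index_comp h'.hasFiniteKerCoker

end Hilbert

theorem mul_proj_add_compl_mul_proj_add_compl {R : Type*} [Ring R] {p : R}
    (hp : IsIdempotentElem p) (u v : R) :
    (u * p + (1 - p)) * (v * p + (1 - p)) =
      u * v * p + (1 - p) + (1 - u) * (v * p - p * v) * p := by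
  have hp' : p * p = p := hp
  simp only [mul_add, add_mul, mul_sub, sub_mul, mul_one, one_mul, mul_assoc, hp']
  abel

section Projection

variable {𝕜 E : Type*} [NontriviallyNormedField 𝕜] [NormedAddCommGroup E] [NormedSpace 𝕜 E]
  {P : E →L[𝕜] E}

theorem isInverseModCompact_mul_proj_add_compl (hP : IsIdempotentElem P) {u u' : E →L[𝕜] E}
    (hu : u' * u = 1) (hu' : u * u' = 1) (hc : IsCompactOperator ⇑(u * P - P * u)) :
    IsInverseModCompact (u' * P + (1 - P)) (u * P + (1 - P)) := by
  have hc' : u' * P - P * u' = -(u' * (u * P - P * u) * u') := by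
    have : u' * (u * P - P * u) * u' = u' * u * P * u' - u' * P * (u * u') := by noncomm_ring
    rw [this, hu, hu', one_mul, mul_one, neg_sub]
  constructor
  · rw [mul_proj_add_compl_mul_proj_add_compl hP, hu, one_mul, add_sub_cancel,
      add_sub_cancel_left]
    exact (hc.clm_mul _).mul_clm P
  · rw [mul_proj_add_compl_mul_proj_add_compl hP, hu', one_mul, add_sub_cancel,
      add_sub_cancel_left, hc']
    exact (((hc.clm_mul u').mul_clm u').neg.clm_mul _).mul_clm P

end Projection

/-- ind~(φ) = ind(φP♭ + P♯) is a group homomorphism on GL(P♭, K):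
ind~(φ ∘ ψ) = ind~(φ) + ind~(ψ). -/
theorem stmt3 {H : Type*} [NormedAddCommGroup H] [InnerProductSpace ℂ H] [CompleteSpace H]
    (Pb Ps : H →L[ℂ] H) (hPb : Pb ∘L Pb = Pb) (hsum : Pb + Ps = 1)
    (φ ψ : H ≃L[ℂ] H)
    (hφ : IsCompactOperator ((φ : H →L[ℂ] H) ∘L Pb - Pb ∘L (φ : H →L[ℂ] H)))
    (hψ : IsCompactOperator ((ψ : H →L[ℂ] H) ∘L Pb - Pb ∘L (ψ : H →L[ℂ] H))) :
    opIndex (((ψ.trans φ : H ≃L[ℂ] H) : H →L[ℂ] H) ∘L Pb + Ps) =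
      opIndex ((φ : H →L[ℂ] H) ∘L Pb + Ps) + opIndex ((ψ : H →L[ℂ] H) ∘L Pb + Ps) := by
  obtain rfl : Ps = 1 - Pb := eq_sub_of_add_eq' hsum
  simp only [← ContinuousLinearMap.mul_def] at hPb hφ hψ ⊢
  have hA := isInverseModCompact_mul_proj_add_compl hPb
    φ.coe_symm_comp_coe φ.coe_comp_coe_symm hφ
  have hB := isInverseModCompact_mul_proj_add_compl hPb
    ψ.coe_symm_comp_coe ψ.coe_comp_coe_symm hψ
  have hprod : ((ψ.trans φ : H ≃L[ℂ] H) : H →L[ℂ] H) * Pb + (1 - Pb) =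
      (φ * Pb + (1 - Pb)) * (ψ * Pb + (1 - Pb)) + (φ - 1) * (ψ * Pb - Pb * ψ) * Pb := by
    rw [mul_proj_add_compl_mul_proj_add_compl hPb, ← ψ.comp_coe φ,
      ← ContinuousLinearMap.mul_def]
    noncomm_ring
  change LinearMap.index _ = LinearMap.index _ + LinearMap.index _
  rw [hprod, (hA.mul hB).index_add_right ((hψ.clm_mul _).mul_clm Pb), hA.index_mul hB]
end

section
/- Let H be a Hilbert space and P₊, P₋ bounded projectors (idempotents) on H such that K = P₊ + P₋ − 1 is a compact operator. Then the pair (im P₊, im P₋) is a Fredholm pair: im P₊ ∩ im P₋ is finite dimensional, and im P₊ + im P₋ is closed and of finite codimension. -/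
open Submodule Module

/-!
On `A ⊓ B`, where `A`, `B` are the ranges of `P₊`, `P₋`, the compact operator `K = P₊ + P₋ - 1`
is the identity, so the Riesz argument (a closed subspace on which `‖x‖ ≤ ‖K x‖` has compact unit
ball) makes it finite dimensional. The sum `A ⊔ B` contains the range of `P₊ + P₋ = 1 + K`, and
`1 + K` has closed range of finite codimension: it is bounded below on the orthogonal complement
of its kernel (a compactness argument), and since `⟪x + K x, x⟫ = 0` on the orthogonal complement
of its range, `‖x‖ ≤ ‖K x‖` there. Finally, a subspace containing a closed subspace of finite
codimension is closed, being the preimage of a subspace of a finite-dimensional Hausdorff quotient.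
-/

open Filter Topology

section Banach

variable {𝕜 E F : Type*} [NontriviallyNormedField 𝕜] [CompleteSpace 𝕜] [NormedAddCommGroup E]
  [NormedSpace 𝕜 E] [CompleteSpace E] [NormedAddCommGroup F] [NormedSpace 𝕜 F]

theorem IsCompactOperator.finiteDimensional_of_norm_le {K : E →L[𝕜] F} (hK : IsCompactOperator K)
    {M : Submodule 𝕜 E} (hM : IsClosed (M : Set E)) (hKM : ∀ x ∈ M, ‖x‖ ≤ ‖K x‖) :
    FiniteDimensional 𝕜 M := by
  have : CompleteSpace M := hM.completeSpace_coe
  let f := K ∘L M.subtypeL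
  have hf : AntilipschitzWith 1 f :=
    f.antilipschitz_of_bound fun x ↦ by simpa [f] using hKM x x.2
  have hfc : IsCompactOperator f := hK.comp_clm M.subtypeL
  obtain ⟨C, hC, hfC⟩ := hfc.image_closedBall_subset_compact 1
  exact .of_isCompact_closedBall₀ 𝕜 one_pos
    (((hf.isClosedEmbedding f.uniformContinuous).isCompact_preimage hC).of_isClosed_subset
      Metric.isClosed_closedBall fun x hx ↦ hfC ⟨x, hx, rfl⟩)

end Banach

section RCLike

variable {𝕜 E F : Type*} [RCLike 𝕜] [NormedAddCommGroup E] [NormedSpace 𝕜 E]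
  [NormedAddCommGroup F] [NormedSpace 𝕜 F]

theorem ContinuousLinearMap.exists_norm_eq_one_tendsto_zero_of_not_antilipschitz
    {f : E →L[𝕜] F} (hf : ¬ ∃ C, AntilipschitzWith C f) :
    ∃ u : ℕ → E, (∀ n, ‖u n‖ = 1) ∧ Tendsto (fun n ↦ f (u n)) atTop (𝓝 0) := by
  rw [antilipschitzWith_iff_exists_mul_le_norm] at hf
  push Not at hf
  have (n : ℕ) : ∃ u : E, ‖u‖ = 1 ∧ ‖f u‖ < 1 / (n + 1) := by
    obtain ⟨x, hx⟩ := hf (1 / (n + 1)) (by positivity)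
    have hx0 : x ≠ 0 := by rintro rfl; simp at hx
    refine ⟨(‖x‖⁻¹ : 𝕜) • x, norm_smul_inv_norm hx0, ?_⟩
    rw [map_smul, norm_smul, norm_inv, RCLike.norm_ofReal, abs_norm,
      inv_mul_lt_iff₀ (norm_pos_iff.mpr hx0), mul_comm]
    exact hx
  choose u hu1 hu using this
  exact ⟨u, hu1,
    squeeze_zero_norm (fun n ↦ (hu n).le) tendsto_one_div_add_atTop_nhds_zero_nat⟩

theorem IsCompactOperator.exists_antilipschitzWith_one_add_comp_subtypeL {K : E →L[𝕜] E}
    (hK : IsCompactOperator K) {M : Submodule 𝕜 E} (hM : IsClosed (M : Set E))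
    (hMK : Disjoint M (LinearMap.ker ((1 + K : E →L[𝕜] E) : E →ₗ[𝕜] E))) :
    ∃ C, AntilipschitzWith C ((1 + K) ∘L M.subtypeL) := by
  by_contra hbdd
  obtain ⟨u, hu1, hTu⟩ :=
    ContinuousLinearMap.exists_norm_eq_one_tendsto_zero_of_not_antilipschitz hbdd
  obtain ⟨C, hC, hKC⟩ := hK.image_closedBall_subset_compact 1
  obtain ⟨y, -, φ, hφ, hKuy⟩ := hC.tendsto_subseq (x := fun n ↦ K (u n))
    fun n ↦ hKC ⟨u n, mem_closedBall_zero_iff.mpr (hu1 n).le, rfl⟩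
  have hTuφ : Tendsto (fun n ↦ (1 + K) (u (φ n) : E)) atTop (𝓝 0) :=
    hTu.comp hφ.tendsto_atTop
  have huy : Tendsto (fun n ↦ (u (φ n) : E)) atTop (𝓝 (-y)) := by
    simpa using hTuφ.sub hKuy
  have hyM : -y ∈ M := hM.mem_of_tendsto huy (Eventually.of_forall fun n ↦ (u (φ n)).2)
  have hy1 : ‖-y‖ = 1 :=
    tendsto_nhds_unique huy.norm (tendsto_const_nhds.congr fun n ↦ (hu1 (φ n)).symm)
  have hyK : (1 + K) (-y) = 0 :=
    tendsto_nhds_unique (((1 + K).continuous.tendsto _).comp huy) hTuφ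
  simp [Submodule.disjoint_def.mp hMK _ hyM hyK] at hy1

end RCLike

section Hilbert

variable {𝕜 H : Type*} [RCLike 𝕜] [NormedAddCommGroup H] [InnerProductSpace 𝕜 H]
  [CompleteSpace H] {K : H →L[𝕜] H}

theorem IsCompactOperator.isClosed_range_one_add (hK : IsCompactOperator K) :
    IsClosed (LinearMap.range ((1 + K : H →L[𝕜] H) : H →ₗ[𝕜] H) : Set H) := by
  set T : H →L[𝕜] H := 1 + K
  set N := LinearMap.ker (T : H →ₗ[𝕜] H)
  have : CompleteSpace N := T.isClosed_ker.completeSpace_coe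
  have : CompleteSpace Nᗮ := N.isClosed_orthogonal.completeSpace_coe
  obtain ⟨C, hC⟩ := hK.exists_antilipschitzWith_one_add_comp_subtypeL N.isClosed_orthogonal
    N.orthogonal_disjoint.symm
  have hrange : LinearMap.range (T : H →ₗ[𝕜] H) =
      LinearMap.range (T ∘L Nᗮ.subtypeL : Nᗮ →ₗ[𝕜] H) := by
    rw [ContinuousLinearMap.toLinearMap_comp, LinearMap.range_comp, Submodule.toLinearMap_subtypeL,
      range_subtype, ← Submodule.map_top, ← N.sup_orthogonal_of_hasOrthogonalProjection,
      Submodule.map_sup, LinearMap.le_ker_iff_map.mp le_rfl, bot_sup_eq]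
  rw [hrange, LinearMap.coe_range]
  exact hC.isClosed_range (T ∘L Nᗮ.subtypeL).uniformContinuous

theorem IsCompactOperator.finiteDimensional_orthogonal_range_one_add (hK : IsCompactOperator K) :
    FiniteDimensional 𝕜 (LinearMap.range ((1 + K : H →L[𝕜] H) : H →ₗ[𝕜] H))ᗮ := by
  refine hK.finiteDimensional_of_norm_le (isClosed_orthogonal _) fun x hx ↦ ?_
  have hTx : inner 𝕜 (x + K x) x = 0 :=
    inner_right_of_mem_orthogonal (LinearMap.mem_range_self _ x) hx
  have hx : ‖x‖ ^ 2 ≤ ‖K x‖ * ‖x‖ := calc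
    ‖x‖ ^ 2 = -RCLike.re (inner 𝕜 (K x) x) := by
      rw [inner_add_left] at hTx
      rw [← inner_self_eq_norm_sq (𝕜 := 𝕜), eq_neg_iff_add_eq_zero, ← map_add, hTx,
        map_zero]
    _ ≤ ‖inner 𝕜 (K x) x‖ := (neg_le_abs _).trans (RCLike.abs_re_le_norm _)
    _ ≤ ‖K x‖ * ‖x‖ := norm_inner_le_norm _ _
  nlinarith [norm_nonneg x, norm_nonneg (K x)]

theorem IsCompactOperator.finiteDimensional_quotient_range_one_add (hK : IsCompactOperator K) :
    FiniteDimensional 𝕜 (H ⧸ LinearMap.range ((1 + K : H →L[𝕜] H) : H →ₗ[𝕜] H)) :=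
  have : CompleteSpace (LinearMap.range ((1 + K : H →L[𝕜] H) : H →ₗ[𝕜] H)) :=
    hK.isClosed_range_one_add.completeSpace_coe
  have := hK.finiteDimensional_orthogonal_range_one_add
  .equiv (quotientEquivOfIsCompl _ _ (isCompl_orthogonal _)).symm

end Hilbert

section Quotient

variable {𝕜 E : Type*} [NontriviallyNormedField 𝕜] [CompleteSpace 𝕜] [AddCommGroup E]
  [Module 𝕜 E] [TopologicalSpace E] [IsTopologicalAddGroup E] [ContinuousSMul 𝕜 E]

theorem Submodule.isClosed_of_le_of_finiteDimensional_quotient {R S : Submodule 𝕜 E}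
    (hRS : R ≤ S) (hR : IsClosed (R : Set E)) [FiniteDimensional 𝕜 (E ⧸ R)] :
    IsClosed (S : Set E) := by
  rw [← sup_eq_right.mpr hRS, ← comap_map_mkQ]
  exact ((S.map R.mkQ).closed_of_finiteDimensional).preimage R.isOpenQuotientMap_mkQ.continuous

end Quotient

/-- if P₊, P₋ are bounded idempotents with P₊ + P₋ − 1 compact, then
(im P₊, im P₋) is a Fredholm pair. -/
theorem stmt5 {H : Type*} [NormedAddCommGroup H] [InnerProductSpace ℂ H] [CompleteSpace H]
    (Pp Pm : H →L[ℂ] H) (hPp : Pp ∘L Pp = Pp) (hPm : Pm ∘L Pm = Pm)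
    (hK : IsCompactOperator ((Pp + Pm - 1 : H →L[ℂ] H))) :
    IsFredholmPair (LinearMap.range (Pp : H →ₗ[ℂ] H)) (LinearMap.range (Pm : H →ₗ[ℂ] H)) := by
  set K : H →L[ℂ] H := Pp + Pm - 1
  have hR : LinearMap.range ((1 + K : H →L[ℂ] H) : H →ₗ[ℂ] H) ≤
      LinearMap.range (Pp : H →ₗ[ℂ] H) ⊔ LinearMap.range (Pm : H →ₗ[ℂ] H) := by
    rintro _ ⟨x, rfl⟩
    have hx : (1 + K) x = Pp x + Pm x := by simp [K]
    exact hx ▸ add_mem_sup (LinearMap.mem_range_self _ x) (LinearMap.mem_range_self _ x)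
  have := hK.finiteDimensional_quotient_range_one_add
  refine ⟨?_, isClosed_of_le_of_finiteDimensional_quotient hR hK.isClosed_range_one_add,
    .of_surjective _ (factor_surjective hR)⟩
  refine hK.finiteDimensional_of_norm_le
    ((ContinuousLinearMap.IsIdempotentElem.isClosed_range hPp).inter
      (ContinuousLinearMap.IsIdempotentElem.isClosed_range hPm)) ?_
  rintro x ⟨hxA, hxB⟩
  have hPx : Pp x = x :=
    (LinearMap.IsIdempotentElem.mem_range_iff
      (ContinuousLinearMap.IsIdempotentElem.toLinearMap hPp)).mp hxA
  have hMx : Pm x = x :=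
    (LinearMap.IsIdempotentElem.mem_range_iff
      (ContinuousLinearMap.IsIdempotentElem.toLinearMap hPm)).mp hxB
  have hKx : K x = x := by simp [K, hPx, hMx]
  rw [hKx]
end

section
/- Let H = H₁ ⊕ ⋯ ⊕ Hₙ be a direct sum decomposition of a Hilbert space into closed subspaces with projectors P₁, …, Pₙ, and let Ψ₁, …, Ψₙ be invertible bounded operators on H, each almost commuting with each projector Pⱼ (i.e. ΨᵢPⱼ − PⱼΨᵢ compact). Set Lᵢ = Ψᵢ(Hᵢ). Then the operator Ψ₁P₁ + Ψ₂P₂ + ⋯ + ΨₙPₙ : H → H is Fredholm and its index equals the index of the map ι : L₁ ⊕ ⋯ ⊕ Lₙ → H given by the sum of inclusions. -/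
/-!
Modulo compact operators the `Pᵢ` are complete orthogonal idempotents commuting with the
invertibles `Ψᵢ`, so in the Calkin algebra `T = ∑ ΨᵢPᵢ` is invertible, with inverse
`∑ PᵢΨᵢ⁻¹`. An operator on a Hilbert space invertible modulo compacts is Fredholm: a compact
`RT - 1` makes the kernel finite-dimensional and, by extracting convergent subsequences, bounds
`T` below on `(ker T)ᗮ`, so the range is closed; the compression of a compact `TR - 1` to
`(range T)ᗮ` is minus the identity, so `(range T)ᗮ` is finite-dimensional. Finally `T`
factors as `ι` after the linear isomorphism `x ↦ (ΨᵢPᵢx)ᵢ : H ≃ L₁ × ⋯ × Lₙ`, so `ι` has the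
same range and an isomorphic kernel.
-/

open Submodule Module

open Filter Topology

namespace OrthogonalIdempotents

theorem sum_mul_mul_sum {A ι : Type*} [Semiring A] [Fintype ι] {e : ι → A}
    (he : OrthogonalIdempotents e) (x y : ι → A) :
    (∑ i, x i * e i) * ∑ j, e j * y j = ∑ i, x i * e i * y i := by
  classical
  simp only [Finset.sum_mul_sum, ← mul_assoc, mul_assoc (x _) (e _) (e _), he.mul_eq]
  simp [apply_ite]

theorem apply_of_mem_range {R M ι : Type*} [Semiring R] [AddCommMonoid M] [Module R M]
    [DecidableEq ι] {e : ι → Module.End R M} (he : OrthogonalIdempotents e) (i : ι) {j : ι} {y : M}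
    (hy : y ∈ LinearMap.range (e j)) : e i y = if i = j then y else 0 := by
  obtain ⟨z, rfl⟩ := hy
  rw [← Module.End.mul_apply, he.mul_eq]
  split_ifs with hij
  · rw [hij]
  · rfl

end OrthogonalIdempotents

namespace CompleteOrthogonalIdempotents

variable {ι : Type*} [Fintype ι]

theorem isUnit_sum_units_mul {A : Type*} [Semiring A] {e : ι → A}
    (he : CompleteOrthogonalIdempotents e) (u : ι → Aˣ) (hu : ∀ i j, Commute (u i : A) (e j)) :
    IsUnit (∑ i, (u i : A) * e i) := by
  have hu' : ∀ i j, Commute (↑(u i)⁻¹ : A) (e j) := fun i j => (hu i j).units_inv_left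
  refine isUnit_iff_exists.2 ⟨∑ i, e i * ↑(u i)⁻¹, ?_, ?_⟩
  · rw [he.sum_mul_mul_sum]
    simp_rw [(hu _ _).eq, mul_assoc, Units.mul_inv, mul_one, he.complete]
  · simp_rw [(hu _ _).eq, ← (hu' _ _).eq]
    rw [he.sum_mul_mul_sum]
    simp_rw [(hu' _ _).eq, mul_assoc, Units.inv_mul, mul_one, he.complete]

def equivPiRange {R M : Type*} [Semiring R] [AddCommMonoid M] [Module R M] {e : ι → Module.End R M}
    (he : CompleteOrthogonalIdempotents e) : M ≃ₗ[R] ∀ i, LinearMap.range (e i) where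
  __ := LinearMap.pi fun i => (e i).rangeRestrict
  invFun y := ∑ i, (y i : M)
  left_inv x := by
    simp [← LinearMap.sum_apply, he.complete]
  right_inv y := by
    classical
    funext i
    ext
    simp [map_sum, fun j => he.apply_of_mem_range i (y j).2]

end CompleteOrthogonalIdempotents

section Calkin

variable (𝕜 E : Type*) [NontriviallyNormedField 𝕜] [NormedAddCommGroup E] [NormedSpace 𝕜 E]

def compactOperatorIdeal : TwoSidedIdeal (E →L[𝕜] E) :=
  .mk' {T | IsCompactOperator T} isCompactOperator_zero (·.add ·) (·.neg)
    (fun hT => hT.clm_comp _) (fun hT => hT.comp_clm _)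

abbrev CalkinAlgebra : Type _ := (compactOperatorIdeal 𝕜 E).ringCon.Quotient

variable {𝕜 E}

abbrev calkinMk : (E →L[𝕜] E) →+* CalkinAlgebra 𝕜 E := (compactOperatorIdeal 𝕜 E).ringCon.mk'

theorem calkinMk_eq_iff {S T : E →L[𝕜] E} :
    calkinMk S = calkinMk T ↔ IsCompactOperator (S - T : E →L[𝕜] E) :=
  (RingCon.eq _).trans <| (TwoSidedIdeal.rel_iff _ _ _).trans <| TwoSidedIdeal.mem_mk' ..

theorem exists_isCompactOperator_of_isUnit_calkinMk {T : E →L[𝕜] E}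
    (hT : IsUnit (calkinMk T)) :
    ∃ R : E →L[𝕜] E, IsCompactOperator (R * T - 1 : E →L[𝕜] E) ∧
      IsCompactOperator (T * R - 1 : E →L[𝕜] E) := by
  obtain ⟨R, hR⟩ := RingCon.mk'_surjective _ hT.unit⁻¹.val
  refine ⟨R, calkinMk_eq_iff.1 ?_, calkinMk_eq_iff.1 ?_⟩
  · rw [map_mul, map_one, hR, IsUnit.val_inv_mul]
  · rw [map_mul, map_one, hR, IsUnit.mul_val_inv]

end Calkin

section Compact

variable {𝕜 E : Type*} [NontriviallyNormedField 𝕜] [NormedAddCommGroup E] [NormedSpace 𝕜 E]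

theorem Submodule.finiteDimensional_of_isCompactOperator_of_forall_apply_eq_s13 [CompleteSpace 𝕜]
    {C : E →L[𝕜] E} (hC : IsCompactOperator C) {M : Submodule 𝕜 E} (hM : IsClosed (M : Set E))
    (hCM : ∀ x ∈ M, C x = x) : FiniteDimensional 𝕜 M := by
  have hCMM : ∀ x ∈ M, (C : E →ₗ[𝕜] E) x ∈ M := fun x hx => (hCM x hx).symm ▸ hx
  have hid : ⇑((C : E →ₗ[𝕜] E).restrict hCMM) = id := funext fun x => Subtype.ext (hCM x x.2)
  exact .of_isCompactOperator_id (hid ▸ hC.restrict hCMM hM)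

theorem exists_tendsto_mem_ker_of_isCompactOperator_mul_sub_one {T R : E →L[𝕜] E}
    (hK : IsCompactOperator (R * T - 1 : E →L[𝕜] E)) {u : ℕ → E} {r : ℝ} (hu : ∀ n, ‖u n‖ ≤ r)
    (hTu : Tendsto (fun n => T (u n)) atTop (𝓝 0)) :
    ∃ w ∈ LinearMap.ker (T : E →ₗ[𝕜] E), ∃ φ : ℕ → ℕ, StrictMono φ ∧
      Tendsto (u ∘ φ) atTop (𝓝 w) := by
  obtain ⟨S, hS, hKS⟩ := hK.image_closedBall_subset_compact r
  obtain ⟨v, -, φ, hφ, hKv⟩ := hS.tendsto_subseq fun n =>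
    hKS ⟨u n, mem_closedBall_zero_iff.2 (hu n), rfl⟩
  have hTuφ := hTu.comp hφ.tendsto_atTop
  -- `u = R (T u) - (R T - 1) u`, and both terms converge along `φ`
  have hu_lim : Tendsto (u ∘ φ) atTop (𝓝 (R 0 - v)) :=
    (((R.continuous.tendsto 0).comp hTuφ).sub hKv).congr fun n => by simp
  refine ⟨R 0 - v, ?_, φ, hφ, hu_lim⟩
  exact tendsto_nhds_unique ((T.continuous.tendsto _).comp hu_lim) hTuφ

theorem finiteDimensional_ker_of_isCompactOperator_mul_sub_one [CompleteSpace 𝕜]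
    {T R : E →L[𝕜] E} (hK : IsCompactOperator (R * T - 1 : E →L[𝕜] E)) :
    FiniteDimensional 𝕜 (LinearMap.ker (T : E →ₗ[𝕜] E)) :=
  Submodule.finiteDimensional_of_isCompactOperator_of_forall_apply_eq_s13
    (C := -(R * T - 1)) hK.neg T.isClosed_ker
    fun x hx => by simp [show T x = 0 from hx]

end Compact

section Hilbert

variable {𝕜 E : Type*} [RCLike 𝕜] [NormedAddCommGroup E] [InnerProductSpace 𝕜 E]

theorem exists_pos_mul_norm_le_of_isCompactOperator_mul_sub_one {T R : E →L[𝕜] E}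
    (hK : IsCompactOperator (R * T - 1 : E →L[𝕜] E)) :
    ∃ c > 0, ∀ x ∈ (LinearMap.ker (T : E →ₗ[𝕜] E))ᗮ, c * ‖x‖ ≤ ‖T x‖ := by
  set N := LinearMap.ker (T : E →ₗ[𝕜] E)
  by_contra! h
  have hx : ∀ n : ℕ, ∃ x ∈ Nᗮ, ‖T x‖ < 1 / (n + 1 : ℝ) * ‖x‖ := fun n => h _ (by positivity)
  choose x hxN hTx using hx
  have hx0 : ∀ n, x n ≠ 0 := fun n h0 => by simpa [h0] using hTx n
  set u : ℕ → E := fun n => (‖x n‖⁻¹ : 𝕜) • x n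
  have hu1 : ∀ n, ‖u n‖ = 1 := fun n => norm_smul_inv_norm (hx0 n)
  have huN : ∀ n, u n ∈ Nᗮ := fun n => Nᗮ.smul_mem _ (hxN n)
  have hTu : ∀ n, ‖T (u n)‖ ≤ 1 / (n + 1 : ℝ) := fun n => by
    rw [map_smul, norm_smul, norm_inv, RCLike.norm_ofReal, abs_norm,
      inv_mul_le_iff₀ (norm_pos_iff.2 (hx0 n)), mul_comm]
    exact (hTx n).le
  obtain ⟨w, hwN, φ, hφ, huw⟩ := exists_tendsto_mem_ker_of_isCompactOperator_mul_sub_one hK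
    (fun n => (hu1 n).le) (squeeze_zero_norm hTu tendsto_one_div_add_atTop_nhds_zero_nat)
  have hw1 : ‖w‖ = 1 :=
    tendsto_nhds_unique huw.norm (by simp only [Function.comp_def, hu1, tendsto_const_nhds])
  have hwN' : w ∈ Nᗮ := N.isClosed_orthogonal.mem_of_tendsto huw (.of_forall fun n => huN _)
  have hw0 : w ∈ N ⊓ Nᗮ := ⟨hwN, hwN'⟩
  rw [N.inf_orthogonal_eq_bot, Submodule.mem_bot] at hw0
  simp [hw0] at hw1

variable [CompleteSpace E]

theorem isClosed_range_of_isCompactOperator_mul_sub_one {T R : E →L[𝕜] E}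
    (hK : IsCompactOperator (R * T - 1 : E →L[𝕜] E)) :
    IsClosed (LinearMap.range (T : E →ₗ[𝕜] E) : Set E) := by
  set N := LinearMap.ker (T : E →ₗ[𝕜] E)
  have : CompleteSpace N := T.isClosed_ker.completeSpace_coe
  obtain ⟨c, hc, hbound⟩ := exists_pos_mul_norm_le_of_isCompactOperator_mul_sub_one hK
  obtain ⟨K, hTK⟩ : ∃ K, AntilipschitzWith K (T ∘L Nᗮ.subtypeL) :=
    antilipschitzWith_iff_exists_mul_le_norm.2 ⟨c, hc, fun x => hbound x x.2⟩
  -- `T` kills the component of `x` in `N`, so it has the same range on `Nᗮ`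
  have hrange : (LinearMap.range (T : E →ₗ[𝕜] E) : Set E) = Set.range (T ∘L Nᗮ.subtypeL) := by
    refine subset_antisymm ?_ fun _ ⟨x, hx⟩ => ⟨x, hx⟩
    rintro _ ⟨x, rfl⟩
    refine ⟨⟨x - N.starProjection x, N.sub_starProjection_mem_orthogonal x⟩, ?_⟩
    have hTx : T (N.starProjection x) = 0 := N.starProjection_apply_mem x
    simp [hTx]
  rw [hrange]
  exact hTK.isClosed_range (T ∘L Nᗮ.subtypeL).uniformContinuous

theorem finiteDimensional_quotient_range_of_isCompactOperator_mul_sub_one {T R : E →L[𝕜] E}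
    (hK : IsCompactOperator (T * R - 1 : E →L[𝕜] E))
    (hT : IsClosed (LinearMap.range (T : E →ₗ[𝕜] E) : Set E)) :
    FiniteDimensional 𝕜 (E ⧸ LinearMap.range (T : E →ₗ[𝕜] E)) := by
  set M := LinearMap.range (T : E →ₗ[𝕜] E)
  have : CompleteSpace M := hT.completeSpace_coe
  -- projecting `y = T R y - (T R - 1) y` onto `Mᗮ ∋ y` kills `T R y`
  have hfin : FiniteDimensional 𝕜 Mᗮ := by
    refine Submodule.finiteDimensional_of_isCompactOperator_of_forall_apply_eq_s13
      (C := -(Mᗮ.starProjection * (T * R - 1))) (hK.clm_comp Mᗮ.starProjection).neg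
      M.isClosed_orthogonal fun y hy => ?_
    have hTRy : Mᗮ.starProjection (T (R y)) = 0 :=
      Mᗮ.starProjection_apply_eq_zero_iff.2 (M.le_orthogonal_orthogonal ⟨R y, rfl⟩)
    simp only [neg_apply, mul_apply_eq_comp, sub_apply, one_apply_eq_self, map_sub, hTRy,
      Submodule.starProjection_eq_self_iff.2 hy, zero_sub, neg_neg]
  exact Module.Finite.equiv (Submodule.quotientEquivOfIsCompl _ _ M.isCompl_orthogonal).symm

end Hilbert

theorem isFredholmOp_of_isCompactOperator_mul_sub_one {H : Type*} [NormedAddCommGroup H]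
    [InnerProductSpace ℂ H] [CompleteSpace H] {T R : H →L[ℂ] H}
    (hRT : IsCompactOperator (R * T - 1 : H →L[ℂ] H))
    (hTR : IsCompactOperator (T * R - 1 : H →L[ℂ] H)) : IsFredholmOp T :=
  have hT := isClosed_range_of_isCompactOperator_mul_sub_one hRT
  ⟨finiteDimensional_ker_of_isCompactOperator_mul_sub_one hRT, hT,
    finiteDimensional_quotient_range_of_isCompactOperator_mul_sub_one hTR hT⟩

theorem isFredholmOp_sum_comp_of_isCompactOperator_commutator {H ι : Type*}
    [NormedAddCommGroup H] [InnerProductSpace ℂ H] [CompleteSpace H] [Fintype ι]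
    {P : ι → H →L[ℂ] H} (hP : CompleteOrthogonalIdempotents P) (Ψ : ι → H ≃L[ℂ] H)
    (hcomm : ∀ i j, IsCompactOperator
      ((Ψ i : H →L[ℂ] H) ∘L P j - P j ∘L (Ψ i : H →L[ℂ] H) : H →L[ℂ] H)) :
    IsFredholmOp (∑ i, (Ψ i : H →L[ℂ] H) ∘L P i) := by
  set π : (H →L[ℂ] H) →+* CalkinAlgebra ℂ H := calkinMk
  have hunit := (hP.map π).isUnit_sum_units_mul
    (fun i => Units.map π.toMonoidHom (Ψ i).toUnit) fun i j => by
      change π (Ψ i : H →L[ℂ] H) * π (P j) = π (P j) * π (Ψ i : H →L[ℂ] H)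
      rw [← map_mul, ← map_mul]
      exact calkinMk_eq_iff.2 (hcomm i j)
  have hπT : π (∑ i, (Ψ i : H →L[ℂ] H) ∘L P i) = ∑ i, π (Ψ i) * π (P i) :=
    (map_sum π _ _).trans (Finset.sum_congr rfl fun i _ => map_mul π _ _)
  obtain ⟨R, hRT, hTR⟩ := exists_isCompactOperator_of_isUnit_calkinMk
    (T := ∑ i, (Ψ i : H →L[ℂ] H) ∘L P i) (hπT ▸ hunit)
  exact isFredholmOp_of_isCompactOperator_mul_sub_one hRT hTR

section Transfer

variable {E F G : Type*} [NormedAddCommGroup E] [NormedSpace ℂ E] [NormedAddCommGroup F]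
  [NormedSpace ℂ F] [NormedAddCommGroup G] [NormedSpace ℂ G]
  {T : E →L[ℂ] G} {U : F →L[ℂ] G} (S : E ≃ₗ[ℂ] F)

theorem range_eq_of_eq_comp_linearEquiv
    (h : (T : E →ₗ[ℂ] G) = (U : F →ₗ[ℂ] G) ∘ₗ (S : E →ₗ[ℂ] F)) :
    LinearMap.range (T : E →ₗ[ℂ] G) = LinearMap.range (U : F →ₗ[ℂ] G) := by
  rw [h, LinearMap.range_comp_of_range_eq_top _ S.range]

def kerEquivOfEqCompLinearEquiv
    (h : (T : E →ₗ[ℂ] G) = (U : F →ₗ[ℂ] G) ∘ₗ (S : E →ₗ[ℂ] F)) :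
    LinearMap.ker (T : E →ₗ[ℂ] G) ≃ₗ[ℂ] LinearMap.ker (U : F →ₗ[ℂ] G) :=
  (LinearEquiv.ofEq _ _ (by rw [h, LinearMap.ker_comp])).trans (S.ofSubmodule' _)

theorem isFredholmOp_iff_of_eq_comp_linearEquiv
    (h : (T : E →ₗ[ℂ] G) = (U : F →ₗ[ℂ] G) ∘ₗ (S : E →ₗ[ℂ] F)) :
    IsFredholmOp T ↔ IsFredholmOp U := by
  rw [IsFredholmOp, IsFredholmOp, range_eq_of_eq_comp_linearEquiv S h]
  exact and_congr_left' (Module.Finite.equiv_iff (kerEquivOfEqCompLinearEquiv S h))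

theorem opIndex_eq_of_eq_comp_linearEquiv
    (h : (T : E →ₗ[ℂ] G) = (U : F →ₗ[ℂ] G) ∘ₗ (S : E →ₗ[ℂ] F)) :
    opIndex T = opIndex U := by
  rw [opIndex, opIndex, range_eq_of_eq_comp_linearEquiv S h,
    (kerEquivOfEqCompLinearEquiv S h).finrank_eq]

end Transfer

/-- for a fan Lᵢ = Ψᵢ(Hᵢ) obtained from a direct sum decomposition
given by projectors Pᵢ and invertibles Ψᵢ almost commuting with each Pⱼ, the
operator ∑ᵢ ΨᵢPᵢ is Fredholm and its index equals the index of the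
sum-of-inclusions map ι : L₁ ⊕ ⋯ ⊕ Lₙ → H. -/
theorem stmt13 {H : Type*} [NormedAddCommGroup H] [InnerProductSpace ℂ H] [CompleteSpace H]
    (n : ℕ) (P : Fin n → (H →L[ℂ] H)) (Ψ : Fin n → (H ≃L[ℂ] H))
    (hsum : ∑ i, P i = 1)
    (horth : ∀ i j, P i ∘L P j = if i = j then P i else 0)
    (hcomm : ∀ i j, IsCompactOperator
      (((Ψ i : H →L[ℂ] H) ∘L P j - P j ∘L (Ψ i : H →L[ℂ] H) : H →L[ℂ] H)))
    (L : Fin n → Submodule ℂ H)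
    (hL : ∀ i, L i = (LinearMap.range (P i : H →ₗ[ℂ] H)).map
      (((Ψ i : H →L[ℂ] H)) : H →ₗ[ℂ] H))
    (ι : (∀ i : Fin n, ↥(L i)) →L[ℂ] H)
    (hι : ι = ∑ i, (L i).subtypeL ∘L ContinuousLinearMap.proj i) :
    IsFredholmOp (∑ i, (Ψ i : H →L[ℂ] H) ∘L P i) ∧
      IsFredholmOp ι ∧
      opIndex (∑ i, (Ψ i : H →L[ℂ] H) ∘L P i) = opIndex ι := by
  have hP : CompleteOrthogonalIdempotents P := ⟨OrthogonalIdempotents.iff_mul_eq.2 horth, hsum⟩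
  have hT := isFredholmOp_sum_comp_of_isCompactOperator_commutator hP Ψ hcomm
  obtain rfl : L = _ := funext hL
  subst hι
  let S : H ≃ₗ[ℂ] ∀ i, (LinearMap.range (P i : H →ₗ[ℂ] H)).map ((Ψ i : H →L[ℂ] H) : H →ₗ[ℂ] H) :=
    (hP.map ContinuousLinearMap.toLinearMapRingHom).equivPiRange ≪≫ₗ
    LinearEquiv.piCongrRight fun i => (Ψ i).toLinearEquiv.submoduleMap _
  refine ⟨hT, (isFredholmOp_iff_of_eq_comp_linearEquiv S ?_).1 hT,
    opIndex_eq_of_eq_comp_linearEquiv S ?_⟩ <;>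
  · ext x
    simp only [LinearMap.coe_comp, Function.comp_apply, ContinuousLinearMap.coe_coe, sum_apply]
    rfl
end
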